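/- arXiv:math/0409327 — 2 statements merged into one kernel-verified Lean document; each statement's English description precedes it below -/
import Mathlib

section
/- Let η : ℝ → ℂ be measurable with |η(y)| ≤ M⟨y⟩^{−2} for all y ∈ ℝ, and let 0 < ε < 1. Then there is a constant C (depending only on ε) such that for every Σ ∈ ℝ: sup_{L ≥ 1} L ∫_ℝ ⟨y⟩^ε |η(L(y−Σ))| dy ≤ C M ⟨Σ⟩^ε. -/
open MeasureTheory

noncomputable section

/-!
Substituting `u = L (y - Σ)` turns `L ∫ ⟨y⟩^ε |η(L(y - Σ))| dy` into `∫ ⟨Σ + u/L⟩^ε |η(u)| du`.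
Peetre's inequality `⟨a + b⟩ ≤ √2 ⟨a⟩⟨b⟩`, together with `|u/L| ≤ |u|` for `L ≥ 1`, bounds the
integrand by `2^{ε/2} M ⟨Σ⟩^ε ⟨u⟩^{ε-2}`, and `⟨u⟩^{ε-2}` is integrable on `ℝ` because `ε < 1`.
-/

lemma integrable_one_add_sq_rpow {s : ℝ} (hs : s < -1 / 2) :
    Integrable (fun u : ℝ => (1 + u ^ 2) ^ s) := by
  have h := integrable_rpow_neg_one_add_norm_sq (E := ℝ) (μ := volume) (r := -2 * s)
    (by rw [Module.finrank_self]; push_cast; linarith)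
  simpa [Real.norm_eq_abs, sq_abs, show -(-2 * s) / 2 = s by ring] using h

lemma integral_one_add_sq_rpow_pos {s : ℝ} (hs : s < -1 / 2) :
    0 < ∫ u : ℝ, (1 + u ^ 2) ^ s := by
  rw [integral_pos_iff_support_of_nonneg (fun u => by positivity) (integrable_one_add_sq_rpow hs)]
  have hsupp : Function.support (fun u : ℝ => (1 + u ^ 2) ^ s) = Set.univ :=
    Set.eq_univ_of_forall fun u => (Real.rpow_pos_of_pos (by positivity) s).ne'
  simp [hsupp]

lemma one_add_add_sq_le (a b : ℝ) : 1 + (a + b) ^ 2 ≤ 2 * (1 + a ^ 2) * (1 + b ^ 2) := by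
  nlinarith [sq_nonneg (a - b), sq_nonneg (a * b)]

lemma one_add_add_sq_rpow_le {s : ℝ} (hs : 0 ≤ s) (a b : ℝ) :
    (1 + (a + b) ^ 2) ^ s ≤ 2 ^ s * (1 + a ^ 2) ^ s * (1 + b ^ 2) ^ s := by
  rw [← Real.mul_rpow (by positivity) (by positivity),
    ← Real.mul_rpow (by positivity) (by positivity)]
  exact Real.rpow_le_rpow (by positivity) (one_add_add_sq_le a b) hs

lemma one_add_add_div_sq_rpow_le {s L : ℝ} (hs : 0 ≤ s) (hL : 1 ≤ L) (a u : ℝ) :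
    (1 + (a + u / L) ^ 2) ^ s ≤ 2 ^ s * (1 + a ^ 2) ^ s * (1 + u ^ 2) ^ s := by
  have hdiv : (u / L) ^ 2 ≤ u ^ 2 := by
    rw [div_pow]
    exact div_le_self (sq_nonneg u) (one_le_pow₀ hL)
  calc (1 + (a + u / L) ^ 2) ^ s ≤ 2 ^ s * (1 + a ^ 2) ^ s * (1 + (u / L) ^ 2) ^ s :=
        one_add_add_sq_rpow_le hs a (u / L)
    _ ≤ 2 ^ s * (1 + a ^ 2) ^ s * (1 + u ^ 2) ^ s := by
        gcongr

lemma integral_comp_add_div {E : Type*} [NormedAddCommGroup E] [NormedSpace ℝ E]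
    (f : ℝ → E) (c L : ℝ) : ∫ u : ℝ, f (c + u / L) = |L| • ∫ y : ℝ, f y := by
  rw [Measure.integral_comp_div (fun v => f (c + v)) L, integral_add_left_eq_self f c]

/-- if `|η(y)| ≤ M⟨y⟩^{−2}` and `0 < ε < 1`, then there is `C = C(ε)` with
`sup_{L ≥ 1} L ∫ ⟨y⟩^ε |η(L(y−Σ))| dy ≤ C M ⟨Σ⟩^ε` for every `Σ ∈ ℝ`.
Here `⟨y⟩ = (1+y²)^{1/2}`, so `⟨y⟩^{−2} = (1+y²)⁻¹` and `⟨y⟩^ε = (1+y²)^{ε/2}`. -/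
theorem stmt_3 (ε : ℝ) (hε0 : 0 < ε) (hε1 : ε < 1) :
    ∃ C : ℝ, 0 < C ∧
      ∀ (η : ℝ → ℂ) (M : ℝ), Measurable η →
        (∀ y : ℝ, ‖η y‖ ≤ M / (1 + y ^ 2)) →
        ∀ Sig : ℝ, ∀ L : ℝ, 1 ≤ L →
          L * (∫ y : ℝ, ((1 + y ^ 2) ^ (ε / 2)) * ‖η (L * (y - Sig))‖) ≤
            C * M * (1 + Sig ^ 2) ^ (ε / 2) := by
  have hs : ε / 2 - 1 < -1 / 2 := by linarith
  refine ⟨2 ^ (ε / 2) * ∫ u : ℝ, (1 + u ^ 2) ^ (ε / 2 - 1),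
    mul_pos (by positivity) (integral_one_add_sq_rpow_pos hs), ?_⟩
  intro η M _ hη Sig L hL
  have hL0 : 0 < L := by linarith
  have hM : 0 ≤ M := (norm_nonneg _).trans (by simpa using hη 0)
  have hsubst := integral_comp_add_div (fun y => (1 + y ^ 2) ^ (ε / 2) * ‖η (L * (y - Sig))‖) Sig L
  simp only [add_sub_cancel_left, mul_div_cancel₀ _ hL0.ne', abs_of_pos hL0, smul_eq_mul]
    at hsubst
  have hbound (u : ℝ) : (1 + (Sig + u / L) ^ 2) ^ (ε / 2) * ‖η u‖ ≤
      2 ^ (ε / 2) * M * (1 + Sig ^ 2) ^ (ε / 2) * (1 + u ^ 2) ^ (ε / 2 - 1) := by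
    have hweight := one_add_add_div_sq_rpow_le (by positivity : 0 ≤ ε / 2) hL Sig u
    calc (1 + (Sig + u / L) ^ 2) ^ (ε / 2) * ‖η u‖
        ≤ (2 ^ (ε / 2) * (1 + Sig ^ 2) ^ (ε / 2) * (1 + u ^ 2) ^ (ε / 2)) * (M / (1 + u ^ 2)) :=
          mul_le_mul hweight (hη u) (norm_nonneg _) (by positivity)
      _ = _ := by rw [Real.rpow_sub_one (by positivity)]; ring
  calc L * ∫ y : ℝ, (1 + y ^ 2) ^ (ε / 2) * ‖η (L * (y - Sig))‖
      = ∫ u : ℝ, (1 + (Sig + u / L) ^ 2) ^ (ε / 2) * ‖η u‖ := hsubst.symm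
    _ ≤ ∫ u : ℝ, 2 ^ (ε / 2) * M * (1 + Sig ^ 2) ^ (ε / 2) * (1 + u ^ 2) ^ (ε / 2 - 1) :=
        integral_mono_of_nonneg (Filter.Eventually.of_forall fun u => by positivity)
          ((integrable_one_add_sq_rpow hs).const_mul _) (Filter.Eventually.of_forall hbound)
    _ = _ := by rw [integral_const_mul]; ring
end
end

section
/- Let V ∈ L^p(ℝ³) ∩ L^q(ℝ³) with p < 3/2 < q, and let 1/p + 1/p' = 1 (so that 1 − 3/p' > 0). Then there is a constant C < ∞, independent of λ and λ₀, such that for all λ, λ₀ ∈ ℝ: sup_{y ∈ ℝ³} ∫_{ℝ³} |V(x)| · |e^{iλ|x−y|} − e^{iλ₀|x−y|}| / |x−y| dx ≤ C |λ−λ₀|^{1−3/p'} ‖V‖. Consequently the operator VB⁺(λ) := VR₀⁺(λ²) − VR₀⁺(λ₀²) satisfies ‖VB⁺(λ)‖_{L¹ → L¹} ≤ C |λ−λ₀|^{1−3/p'} ‖V‖. -/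
/-!
With `Δ = |λ - λ₀|` one has `|e^{iλr} - e^{iλ₀r}| ≤ min(2, Δr)`, so the kernel is dominated by the
truncated Coulomb kernel `k_Δ(x) = min(2/|x|, Δ) = Δ k_1(Δx)`. Since `k_1 ≲ (1 + |x|)⁻¹` lies in
`L^{p'}` for `p' > 3`, scaling gives `‖k_Δ‖_{p'} = Δ^{1 - 3/p'} ‖k_1‖_{p'}`, and Hölder's inequality
gives the first bound (for `p = 1` simply use `k_Δ ≤ Δ`). The `L¹ → L¹` bound follows from it by
Tonelli's theorem.
-/

open MeasureTheory Complex

noncomputable section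

abbrev E3 : Type := EuclideanSpace ℝ (Fin 3)

/-- `max(‖V‖_{L^p}, ‖V‖_{L^q})`. -/
def Vnorm (p q : ℝ) (V : E3 → ℝ) : ℝ :=
  max ((eLpNorm V (ENNReal.ofReal p) volume).toReal)
      ((eLpNorm V (ENNReal.ofReal q) volume).toReal)

open scoped ENNReal
open Module

lemma norm_cexp_I_mul_sub_le (a b r : ℝ) (hr : 0 ≤ r) :
    ‖exp (I * a * r) - exp (I * b * r)‖ ≤ min 2 (|a - b| * r) := by
  have hexp : ∀ s : ℝ, exp (I * s * r) = exp (I * ↑(s * r)) := fun s => by push_cast; ring_nf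
  refine le_min ?_ ?_
  · calc _ ≤ ‖exp (I * a * r)‖ + ‖exp (I * b * r)‖ := norm_sub_le _ _
      _ = 2 := by rw [hexp, hexp, norm_exp_I_mul_ofReal, norm_exp_I_mul_ofReal]; norm_num
  · have hfactor : exp (I * a * r) - exp (I * b * r)
        = exp (I * b * r) * (exp (I * ↑((a - b) * r)) - 1) := by
      rw [mul_sub, ← Complex.exp_add]; push_cast; ring_nf
    calc _ = ‖exp (I * ↑((a - b) * r)) - 1‖ := by
          rw [hfactor, norm_mul, hexp, norm_exp_I_mul_ofReal, one_mul]
      _ ≤ ‖(a - b) * r‖ := Real.norm_exp_I_mul_ofReal_sub_one_le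
      _ = |a - b| * r := by rw [Real.norm_eq_abs, abs_mul, abs_of_nonneg hr]

section TruncatedCoulomb

variable {E : Type*} [NormedAddCommGroup E]

def truncCoulomb (Δ : ℝ) (x : E) : ℝ := min (2 / ‖x‖) Δ

lemma truncCoulomb_nonneg {Δ : ℝ} (hΔ : 0 ≤ Δ) (x : E) : 0 ≤ truncCoulomb Δ x :=
  le_min (by positivity) hΔ

lemma truncCoulomb_le (Δ : ℝ) (x : E) : truncCoulomb Δ x ≤ Δ := min_le_right _ _

lemma truncCoulomb_zero (x : E) : truncCoulomb 0 x = 0 :=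
  le_antisymm (truncCoulomb_le 0 x) (truncCoulomb_nonneg le_rfl x)

lemma truncCoulomb_eq_mul_smul [NormedSpace ℝ E] {Δ : ℝ} (hΔ : 0 < Δ) (x : E) :
    truncCoulomb Δ x = Δ * truncCoulomb 1 (Δ • x) := by
  rw [truncCoulomb, truncCoulomb, norm_smul, Real.norm_of_nonneg hΔ.le,
    mul_min_of_nonneg _ _ hΔ.le, mul_one, mul_div_assoc', mul_div_mul_left _ _ hΔ.ne']

lemma truncCoulomb_one_le (x : E) : truncCoulomb 1 x ≤ 3 / (1 + ‖x‖) := by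
  rw [le_div_iff₀ (by positivity)]
  rcases le_total ‖x‖ 2 with hx | hx
  · nlinarith [truncCoulomb_le 1 x, truncCoulomb_nonneg zero_le_one x]
  · have hx0 : 0 < ‖x‖ := by linarith
    calc truncCoulomb 1 x * (1 + ‖x‖) ≤ 2 / ‖x‖ * (1 + ‖x‖) :=
          mul_le_mul_of_nonneg_right (min_le_left _ _) (by positivity)
      _ ≤ 3 := by rw [div_mul_eq_mul_div, div_le_iff₀ hx0]; linarith

lemma norm_cexp_sub_div_le_truncCoulomb (a b : ℝ) (x : E) :
    ‖exp (I * a * ‖x‖) - exp (I * b * ‖x‖)‖ / ‖x‖ ≤ truncCoulomb |a - b| x := by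
  rcases (norm_nonneg x).eq_or_lt with hx | hx
  · rw [← hx, div_zero]; exact truncCoulomb_nonneg (abs_nonneg _) x
  · refine le_min ?_ ?_ <;> rw [div_le_iff₀ hx]
    · rw [div_mul_cancel₀ _ hx.ne']
      exact (norm_cexp_I_mul_sub_le a b _ hx.le).trans (min_le_left _ _)
    · exact (norm_cexp_I_mul_sub_le a b _ hx.le).trans (min_le_right _ _)

end TruncatedCoulomb

theorem lintegral_enorm_mul_truncCoulomb_le_eLpNorm_one {E F : Type*} [NormedAddCommGroup E]
    [MeasurableSpace E] [NormedAddCommGroup F] {μ : Measure E} (V : E → F) (Δ : ℝ) (y : E) :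
    ∫⁻ x, ‖V x‖ₑ * ENNReal.ofReal (truncCoulomb Δ (x - y)) ∂μ ≤
      eLpNorm V 1 μ * ENNReal.ofReal Δ := by
  rw [eLpNorm_one_eq_lintegral_enorm, ← lintegral_mul_const' _ _ ENNReal.ofReal_ne_top]
  gcongr with x
  exact truncCoulomb_le _ _

lemma measurable_truncCoulomb {E : Type*} [NormedAddCommGroup E] [MeasurableSpace E]
    [BorelSpace E] (Δ : ℝ) : Measurable (truncCoulomb Δ : E → ℝ) := by
  unfold truncCoulomb; fun_prop

section Haar

variable {E : Type*} [NormedAddCommGroup E] [NormedSpace ℝ E] [FiniteDimensional ℝ E]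
  [MeasurableSpace E] [BorelSpace E] {μ : Measure E} [μ.IsAddHaarMeasure]
  {F : Type*} [NormedAddCommGroup F]

lemma integrable_truncCoulomb_one_rpow {s : ℝ} (hs : finrank ℝ E < s) :
    Integrable (fun x => truncCoulomb 1 x ^ s) μ := by
  refine ((integrable_one_add_norm hs).const_mul (3 ^ s)).mono'
    ((measurable_truncCoulomb 1).pow_const s).aestronglyMeasurable (ae_of_all _ fun x => ?_)
  have h0 := truncCoulomb_nonneg zero_le_one x
  rw [Real.norm_of_nonneg (Real.rpow_nonneg h0 s), Real.rpow_neg (by positivity),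
    ← div_eq_mul_inv, ← Real.div_rpow (by norm_num) (by positivity)]
  exact Real.rpow_le_rpow h0 (truncCoulomb_one_le x)
    (by linarith [(finrank ℝ E).cast_nonneg (α := ℝ)])

lemma integral_truncCoulomb_rpow_sub {Δ : ℝ} (hΔ : 0 < Δ) (s : ℝ) (y : E) :
    ∫ x, truncCoulomb Δ (x - y) ^ s ∂μ =
      Δ ^ (s - finrank ℝ E) * ∫ x, truncCoulomb 1 x ^ s ∂μ := by
  rw [integral_sub_right_eq_self (fun x => truncCoulomb Δ x ^ s)]
  simp_rw [truncCoulomb_eq_mul_smul hΔ, Real.mul_rpow hΔ.le (truncCoulomb_nonneg zero_le_one _)]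
  rw [integral_const_mul,
    Measure.integral_comp_smul_of_nonneg μ (fun x => truncCoulomb 1 x ^ s) Δ (hR := hΔ.le),
    smul_eq_mul, Real.rpow_sub hΔ, Real.rpow_natCast]
  ring

lemma integrable_truncCoulomb_rpow_sub {Δ : ℝ} (hΔ : 0 < Δ) {s : ℝ} (hs : finrank ℝ E < s)
    (y : E) : Integrable (fun x => truncCoulomb Δ (x - y) ^ s) μ := by
  refine Integrable.comp_sub_right (f := fun x => truncCoulomb Δ x ^ s) ?_ y
  simp_rw [truncCoulomb_eq_mul_smul hΔ, Real.mul_rpow hΔ.le (truncCoulomb_nonneg zero_le_one _)]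
  exact ((integrable_truncCoulomb_one_rpow hs).comp_smul hΔ.ne').const_mul _

theorem lintegral_enorm_mul_truncCoulomb_le {p p' : ℝ} (hpp' : p.HolderConjugate p')
    (hd : finrank ℝ E < p') {V : E → F} (hV : AEStronglyMeasurable V μ) {Δ : ℝ} (hΔ : 0 ≤ Δ)
    (y : E) :
    ∫⁻ x, ‖V x‖ₑ * ENNReal.ofReal (truncCoulomb Δ (x - y)) ∂μ ≤
      eLpNorm V (ENNReal.ofReal p) μ * ENNReal.ofReal
        (Δ ^ (1 - finrank ℝ E / p') * (∫ x, truncCoulomb 1 x ^ p' ∂μ) ^ (1 / p')) := by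
  rcases hΔ.eq_or_lt with rfl | hΔ
  · simp [truncCoulomb_zero]
  set K := ∫ x, truncCoulomb 1 x ^ p' ∂μ
  have hK : 0 ≤ K :=
    integral_nonneg fun x => Real.rpow_nonneg (truncCoulomb_nonneg zero_le_one x) _
  have hk : ∀ x, 0 ≤ truncCoulomb Δ (x - y) := fun x => truncCoulomb_nonneg hΔ.le _
  have hnorm_V : (∫⁻ x, ‖V x‖ₑ ^ p ∂μ) ^ (1 / p) = eLpNorm V (ENNReal.ofReal p) μ := by
    rw [eLpNorm_eq_lintegral_rpow_enorm_toReal (by simpa using hpp'.pos) ENNReal.ofReal_ne_top,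
      ENNReal.toReal_ofReal hpp'.nonneg]
  have hnorm_k : (∫⁻ x, ENNReal.ofReal (truncCoulomb Δ (x - y)) ^ p' ∂μ) ^ (1 / p') =
      ENNReal.ofReal (Δ ^ (1 - finrank ℝ E / p') * K ^ (1 / p')) := by
    simp_rw [ENNReal.ofReal_rpow_of_nonneg (hk _) hpp'.symm.nonneg]
    rw [← ofReal_integral_eq_lintegral_ofReal (integrable_truncCoulomb_rpow_sub hΔ hd y)
        (ae_of_all _ fun x => Real.rpow_nonneg (hk x) _), integral_truncCoulomb_rpow_sub hΔ,
      ENNReal.ofReal_rpow_of_nonneg (by positivity) (by simpa using hpp'.symm.nonneg),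
      Real.mul_rpow (by positivity) hK, ← Real.rpow_mul hΔ.le]
    congr 3
    field_simp [hpp'.symm.ne_zero]
  calc _ ≤ (∫⁻ x, ‖V x‖ₑ ^ p ∂μ) ^ (1 / p) *
        (∫⁻ x, ENNReal.ofReal (truncCoulomb Δ (x - y)) ^ p' ∂μ) ^ (1 / p') :=
        ENNReal.lintegral_mul_le_Lp_mul_Lq μ hpp' hV.enorm
          ((measurable_truncCoulomb Δ).comp (measurable_sub_const y)).ennreal_ofReal.aemeasurable
    _ = _ := by rw [hnorm_V, hnorm_k]

end Haar

theorem lintegral_enorm_integral_le_of_enorm_le_mul {α β G : Type*} [MeasurableSpace α]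
    [MeasurableSpace β] [NormedAddCommGroup G] [NormedSpace ℝ G] {μ : Measure α} {ν : Measure β}
    [SFinite μ] [SFinite ν] {F : α → β → G} {k : α → β → ℝ≥0∞} {g : β → ℝ≥0∞}
    (hk : AEMeasurable (Function.uncurry k) (μ.prod ν)) (hg : AEMeasurable g ν)
    (hg_ne_top : ∀ y, g y ≠ ∞) (hF : ∀ x y, ‖F x y‖ₑ ≤ k x y * g y) {M : ℝ≥0∞}
    (hM : ∀ y, ∫⁻ x, k x y ∂μ ≤ M) :
    ∫⁻ x, ‖∫ y, F x y ∂ν‖ₑ ∂μ ≤ M * ∫⁻ y, g y ∂ν := calc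
  _ ≤ ∫⁻ x, ∫⁻ y, k x y * g y ∂ν ∂μ := lintegral_mono fun x =>
        (enorm_integral_le_lintegral_enorm _).trans (lintegral_mono (hF x))
  _ = ∫⁻ y, ∫⁻ x, k x y * g y ∂μ ∂ν := lintegral_lintegral_swap (hk.mul hg.comp_snd)
  _ = ∫⁻ y, (∫⁻ x, k x y ∂μ) * g y ∂ν := by
        simp_rw [lintegral_mul_const' _ _ (hg_ne_top _)]
  _ ≤ ∫⁻ y, M * g y ∂ν := lintegral_mono fun y => by gcongr; exact hM y
  _ = M * ∫⁻ y, g y ∂ν := lintegral_const_mul'' M hg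

theorem integral_le_of_lintegral_enorm_le {α : Type*} [MeasurableSpace α] {μ : Measure α}
    {f : α → ℝ} {B : ℝ} (hB : 0 ≤ B) (h : ∫⁻ a, ‖f a‖ₑ ∂μ ≤ ENNReal.ofReal B) :
    ∫ a, f a ∂μ ≤ B :=
  (le_abs_self _).trans <| (norm_integral_le_lintegral_norm f).trans <|
    ENNReal.toReal_le_of_le_ofReal hB (by simpa only [ofReal_norm] using h)

theorem exists_lintegral_enorm_mul_truncCoulomb_le {p p' : ℝ} (hp1 : 1 ≤ p) (hp : p < 3 / 2)
    (hp' : 1 / p + 1 / p' = 1) {V : E3 → ℝ} (hV : AEStronglyMeasurable V volume) :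
    ∃ A : ℝ, 0 < A ∧ ∀ Δ : ℝ, 0 ≤ Δ → ∀ y : E3,
      ∫⁻ x, ‖V x‖ₑ * ENNReal.ofReal (truncCoulomb Δ (x - y)) ≤
        ENNReal.ofReal (A * Δ ^ (1 - 3 / p')) * eLpNorm V (ENNReal.ofReal p) volume := by
  rcases hp1.eq_or_lt with rfl | hp1
  · -- for `p = 1` the junk value `p' = 0` makes the exponent `1 - 3 / p'` equal to `1`
    have hp'0 : p' = 0 := by simpa using hp'
    refine ⟨1, one_pos, fun Δ _ y => ?_⟩
    simpa [hp'0, mul_comm] using lintegral_enorm_mul_truncCoulomb_le_eLpNorm_one V Δ y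
  have hpp' : p.HolderConjugate p' := Real.holderConjugate_iff.mpr ⟨hp1, by simpa using hp'⟩
  have hd : (finrank ℝ E3 : ℝ) < p' := by
    rw [finrank_euclideanSpace_fin, hpp'.conjugate_eq, lt_div_iff₀ (by linarith)]
    push_cast; linarith
  set K := ∫ x : E3, truncCoulomb 1 x ^ p'
  have hK : 0 ≤ K :=
    integral_nonneg fun x => Real.rpow_nonneg (truncCoulomb_nonneg zero_le_one x) _
  refine ⟨K ^ (1 / p') + 1, by positivity, fun Δ hΔ y => ?_⟩
  refine (lintegral_enorm_mul_truncCoulomb_le hpp' hd hV hΔ y).trans ?_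
  rw [finrank_euclideanSpace_fin, Nat.cast_ofNat, mul_comm (eLpNorm _ _ _)]
  gcongr ?_ * _
  refine ENNReal.ofReal_le_ofReal ?_
  nlinarith [Real.rpow_nonneg hΔ (1 - 3 / p'), Real.rpow_nonneg hK (1 / p')]

theorem enorm_mul_mul_div_four_pi_le (v : ℝ) (z w : ℂ) {r : ℝ} (hr : 0 ≤ r) :
    ‖(v : ℂ) * (z * w / ((4 * Real.pi * r : ℝ) : ℂ))‖ₑ ≤
      ‖v‖ₑ * ENNReal.ofReal (‖z‖ / r) * ‖w‖ₑ := by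
  have h4π : (4 * Real.pi)⁻¹ ≤ 1 := inv_le_one_of_one_le₀ (by linarith [Real.pi_gt_three])
  have hnorm : ‖(v : ℂ) * (z * w / ((4 * Real.pi * r : ℝ) : ℂ))‖ ≤ ‖v‖ * (‖z‖ / r) * ‖w‖ := calc
    _ = (4 * Real.pi)⁻¹ * (‖v‖ * (‖z‖ / r) * ‖w‖) := by
        rw [norm_mul, norm_div, norm_mul, Complex.norm_real, Complex.norm_real,
          Real.norm_of_nonneg (by positivity : 0 ≤ 4 * Real.pi * r)]
        simp only [div_eq_mul_inv, mul_inv]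
        ring
    _ ≤ _ := mul_le_of_le_one_left (by positivity) h4π
  rw [← ofReal_norm, ← ofReal_norm v, ← ofReal_norm w, ← ENNReal.ofReal_mul (norm_nonneg _),
    ← ENNReal.ofReal_mul (by positivity)]
  exact ENNReal.ofReal_le_ofReal hnorm

theorem integral_norm_VB_apply_le {V : E3 → ℝ} (hV : AEStronglyMeasurable V volume)
    {lam lam0 M : ℝ} (hM : 0 ≤ M)
    (hk : ∀ y : E3, ∫⁻ x, ‖V x‖ₑ * ENNReal.ofReal
      (‖exp (I * lam * ‖x - y‖) - exp (I * lam0 * ‖x - y‖)‖ / ‖x - y‖) ≤ ENNReal.ofReal M)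
    {f : E3 → ℂ} (hf : Integrable f volume) :
    ∫ x, ‖(V x : ℂ) * ∫ y, (exp (I * lam * ‖x - y‖) - exp (I * lam0 * ‖x - y‖)) * f y /
        ((4 * Real.pi * ‖x - y‖ : ℝ) : ℂ)‖ ≤ M * ∫ y, ‖f y‖ := by
  have hmeas : AEMeasurable (Function.uncurry fun x y : E3 => ‖V x‖ₑ * ENNReal.ofReal
      (‖exp (I * lam * ‖x - y‖) - exp (I * lam0 * ‖x - y‖)‖ / ‖x - y‖))
      ((volume : Measure E3).prod volume) :=
    hV.comp_fst.enorm.mul (by fun_prop)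
  refine integral_le_of_lintegral_enorm_le
    (mul_nonneg hM (integral_nonneg fun y => norm_nonneg _)) ?_
  calc _ = ∫⁻ x, ‖∫ y, (V x : ℂ) * ((exp (I * lam * ‖x - y‖) - exp (I * lam0 * ‖x - y‖)) *
        f y / ((4 * Real.pi * ‖x - y‖ : ℝ) : ℂ))‖ₑ := by
        simp_rw [enorm_norm, integral_const_mul]
    _ ≤ ENNReal.ofReal M * ∫⁻ y, ‖f y‖ₑ :=
        lintegral_enorm_integral_le_of_enorm_le_mul hmeas hf.aestronglyMeasurable.enorm
          (fun _ => enorm_ne_top)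
          (fun x y => enorm_mul_mul_div_four_pi_le _ _ _ (norm_nonneg _)) hk
    _ = ENNReal.ofReal (M * ∫ y, ‖f y‖) := by
        rw [← ofReal_integral_norm_eq_lintegral_enorm hf, ← ENNReal.ofReal_mul hM]

lemma eLpNorm_le_ofReal_Vnorm {p q : ℝ} {V : E3 → ℝ}
    (hVp : MemLp V (ENNReal.ofReal p) volume) :
    eLpNorm V (ENNReal.ofReal p) volume ≤ ENNReal.ofReal (Vnorm p q V) := by
  rw [← ENNReal.ofReal_toReal hVp.eLpNorm_ne_top]
  exact ENNReal.ofReal_le_ofReal (le_max_left _ _)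

lemma Vnorm_nonneg (p q : ℝ) (V : E3 → ℝ) : 0 ≤ Vnorm p q V :=
  le_max_of_le_left ENNReal.toReal_nonneg

theorem stmt_12_general (p q p' : ℝ) (hp1 : 1 ≤ p) (hp : p < 3 / 2)
    (hp' : 1 / p + 1 / p' = 1)
    (V : E3 → ℝ)
    (hVp : MemLp V (ENNReal.ofReal p) volume) :
    ∃ C : ℝ, 0 < C ∧ ∀ lam lam0 : ℝ,
      (∀ y : E3,
        (∫ x : E3, |V x| *
            ‖Complex.exp (Complex.I * lam * ‖x - y‖) -
              Complex.exp (Complex.I * lam0 * ‖x - y‖)‖ / ‖x - y‖) ≤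
          C * |lam - lam0| ^ (1 - 3 / p') * Vnorm p q V) ∧
      (∀ f : E3 → ℂ, Integrable f volume →
        (∫ x : E3, ‖(V x : ℂ) * ∫ y : E3,
            (Complex.exp (Complex.I * lam * ‖x - y‖) -
              Complex.exp (Complex.I * lam0 * ‖x - y‖)) * f y /
              ((4 * Real.pi * ‖x - y‖ : ℝ) : ℂ)‖) ≤
          C * |lam - lam0| ^ (1 - 3 / p') * Vnorm p q V * ∫ y : E3, ‖f y‖) := by
  obtain ⟨A, hA, hcore⟩ :=
    exists_lintegral_enorm_mul_truncCoulomb_le hp1 hp hp' hVp.aestronglyMeasurable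
  refine ⟨A, hA, fun lam lam0 => ?_⟩
  set Δ := |lam - lam0|
  have hM : 0 ≤ A * Δ ^ (1 - 3 / p') * Vnorm p q V := by
    have := Vnorm_nonneg p q V; positivity
  have hk : ∀ y : E3, ∫⁻ x, ‖V x‖ₑ * ENNReal.ofReal
      (‖exp (I * lam * ‖x - y‖) - exp (I * lam0 * ‖x - y‖)‖ / ‖x - y‖) ≤
      ENNReal.ofReal (A * Δ ^ (1 - 3 / p') * Vnorm p q V) := fun y => calc
    _ ≤ ∫⁻ x, ‖V x‖ₑ * ENNReal.ofReal (truncCoulomb Δ (x - y)) := lintegral_mono fun x => by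
          gcongr; exact norm_cexp_sub_div_le_truncCoulomb lam lam0 (x - y)
    _ ≤ ENNReal.ofReal (A * Δ ^ (1 - 3 / p')) * eLpNorm V (ENNReal.ofReal p) volume :=
          hcore Δ (abs_nonneg _) y
    _ ≤ ENNReal.ofReal (A * Δ ^ (1 - 3 / p')) * ENNReal.ofReal (Vnorm p q V) := by
          gcongr; exact eLpNorm_le_ofReal_Vnorm hVp
    _ = _ := (ENNReal.ofReal_mul (by positivity)).symm
  refine ⟨fun y => integral_le_of_lintegral_enorm_le hM ?_,
    fun f hf => integral_norm_VB_apply_le hVp.aestronglyMeasurable hM hk hf⟩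
  simpa only [mul_div_assoc, enorm_mul, Real.enorm_abs,
    Real.enorm_of_nonneg (div_nonneg (norm_nonneg _) (norm_nonneg _))] using hk y

/-- with `1/p + 1/p' = 1` (so `1 − 3/p' > 0`), there is `C = C(p,q)` with
`sup_y ∫ |V(x)| |e^{iλ|x−y|} − e^{iλ₀|x−y|}|/|x−y| dx ≤ C |λ−λ₀|^{1−3/p'} ‖V‖`
for all `λ, λ₀ ∈ ℝ`; consequently the operator `VB⁺(λ)` with kernel
`V(x)(e^{iλ|x−y|} − e^{iλ₀|x−y|})/(4π|x−y|)` satisfies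
`‖VB⁺(λ)‖_{L¹→L¹} ≤ C |λ−λ₀|^{1−3/p'} ‖V‖`. -/
theorem stmt_12 (p q p' : ℝ) (hp1 : 1 ≤ p) (hp : p < 3 / 2) (hq : 3 / 2 < q)
    (hp' : 1 / p + 1 / p' = 1)
    (V : E3 → ℝ)
    (hVp : MemLp V (ENNReal.ofReal p) volume)
    (hVq : MemLp V (ENNReal.ofReal q) volume) :
    ∃ C : ℝ, 0 < C ∧ ∀ lam lam0 : ℝ,
      (∀ y : E3,
        (∫ x : E3, |V x| *
            ‖Complex.exp (Complex.I * lam * ‖x - y‖) -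
              Complex.exp (Complex.I * lam0 * ‖x - y‖)‖ / ‖x - y‖) ≤
          C * |lam - lam0| ^ (1 - 3 / p') * Vnorm p q V) ∧
      (∀ f : E3 → ℂ, Integrable f volume →
        (∫ x : E3, ‖(V x : ℂ) * ∫ y : E3,
            (Complex.exp (Complex.I * lam * ‖x - y‖) -
              Complex.exp (Complex.I * lam0 * ‖x - y‖)) * f y /
              ((4 * Real.pi * ‖x - y‖ : ℝ) : ℂ)‖) ≤
          C * |lam - lam0| ^ (1 - 3 / p') * Vnorm p q V * ∫ y : E3, ‖f y‖) :=
  stmt_12_general p q p' hp1 hp hp' V hVp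
end
end
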